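/- arXiv:1401.1865 — 3 statements merged into one kernel-verified Lean document; each statement's English description precedes it below -/
import Mathlib

section
/- Let G be a finite simple graph on n ≥ 1 vertices and let d > 0 be a real number such that the sum of the vertex degrees of G is at most d·n (equivalently, 2|E(G)| ≤ d·n). Then the HL-index satisfies R(G) ≤ √d; that is, both median eigenvalues satisfy |λ_H| ≤ √d and |λ_L| ≤ √d. -/
open Polynomial Finset Matrix in
private lemma my_charpoly_conj {n : Type*} [Fintype n] [DecidableEq n] {R : Type*} [CommRing R]
    (u d v : Matrix n n R) (h1 : u * v = 1) :
    (u * d * v).charpoly = d.charpoly := by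
  have hmapmul : ∀ (a b : Matrix n n R),
      (a * b).map (C : R → R[X]) = a.map C * b.map C := fun a b => by
    simpa using RingHom.map_mul (C : R →+* R[X]).mapMatrix a b
  have h1' : u.map (C : R → R[X]) * v.map C = 1 := by
    rw [← hmapmul, h1]
    simpa using RingHom.map_one (C : R →+* R[X]).mapMatrix
  have hcm : charmatrix (u * d * v) = u.map C * charmatrix d * v.map C := by
    unfold charmatrix
    simp only [RingHom.mapMatrix_apply]
    rw [mul_sub, sub_mul]
    congr 1
    · rw [← (Matrix.scalar_commute (X : R[X]) (fun r' => Commute.all _ _) (u.map C)).eq,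
        Matrix.mul_assoc, h1', Matrix.mul_one]
    · rw [hmapmul, hmapmul]
  rw [Matrix.charpoly, Matrix.charpoly, hcm, det_mul, det_mul, mul_comm (det (u.map C)),
    mul_assoc, ← det_mul, h1', det_one, mul_one]

open Polynomial Finset Matrix in
private lemma my_charpoly_diagonal {n : Type*} [Fintype n] [DecidableEq n] {R : Type*}
    [CommRing R] (f : n → R) :
    (Matrix.diagonal f).charpoly = ∏ i, (X - C (f i)) := by
  have : charmatrix (Matrix.diagonal f) = Matrix.diagonal fun i => X - C (f i) := by
    ext i j
    by_cases h : i = j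
    · subst h; simp
    · simp [h, Matrix.diagonal_apply_ne _ h]
  rw [Matrix.charpoly, this, det_diagonal]

open Polynomial Finset Matrix in
private lemma eig_facts {V : Type*} [Fintype V] [DecidableEq V] (G : SimpleGraph V)
    [DecidableRel G.Adj] (μ : Fin (Fintype.card V) → ℝ)
    (hch : (SimpleGraph.adjMatrix ℝ G).charpoly = ∏ i, (X - C (μ i))) :
    (∑ i, μ i = 0) ∧ (∑ i, μ i ^ 2 = ∑ v : V, (G.degree v : ℝ)) := by
  set A := SimpleGraph.adjMatrix ℝ G with hAdef
  have hA : A.IsHermitian := by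
    rw [Matrix.IsHermitian, Matrix.conjTranspose_eq_transpose_of_trivial]
    exact G.isSymm_adjMatrix
  set ν : V → ℝ := hA.eigenvalues with hνdef
  set U : Matrix V V ℝ := (Matrix.IsHermitian.eigenvectorUnitary hA : Matrix V V ℝ) with hUdef
  have hofReal : ((RCLike.ofReal : ℝ → ℝ) ∘ ν) = ν := by funext i; simp
  have hspec : A = U * Matrix.diagonal ν * star U := by
    have := hA.spectral_theorem
    rwa [hofReal] at this
  have hU1 : U * star U = 1 :=
    Matrix.mem_unitaryGroup_iff.mp (Matrix.IsHermitian.eigenvectorUnitary hA).2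
  have hU2 : star U * U = 1 :=
    Matrix.mem_unitaryGroup_iff'.mp (Matrix.IsHermitian.eigenvectorUnitary hA).2
  have hchν : A.charpoly = ∏ v : V, (X - C (ν v)) := by
    rw [hspec, my_charpoly_conj _ _ _ hU1, my_charpoly_diagonal]
  have hmult : Multiset.map μ Finset.univ.val = Multiset.map ν Finset.univ.val := by
    have hr := congrArg Polynomial.roots (hch.symm.trans hchν)
    have e1 : ∏ i : Fin (Fintype.card V), (X - C (μ i)) =
        ((Multiset.map μ Finset.univ.val).map fun a => X - C a).prod := by
      rw [Multiset.map_map]; rfl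
    have e2 : ∏ v : V, (X - C (ν v)) =
        ((Multiset.map ν Finset.univ.val).map fun a => X - C a).prod := by
      rw [Multiset.map_map]; rfl
    rwa [e1, e2, Polynomial.roots_multiset_prod_X_sub_C,
      Polynomial.roots_multiset_prod_X_sub_C] at hr
  have hkey : ∀ f : ℝ → ℝ, ∑ i, f (μ i) = ∑ v, f (ν v) := by
    intro f
    have : ((Multiset.map μ Finset.univ.val).map f).sum
        = ((Multiset.map ν Finset.univ.val).map f).sum := by rw [hmult]
    rwa [Multiset.map_map, Multiset.map_map] at this
  have htrdiag : ∀ g : V → ℝ, Matrix.trace (U * Matrix.diagonal g * star U) = ∑ v, g v := by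
    intro g
    rw [Matrix.trace_mul_cycle, hU2, Matrix.one_mul, Matrix.trace_diagonal]
  have htr : ∑ v, ν v = 0 := by
    have : Matrix.trace A = 0 := by rw [hAdef]; simp
    rw [hspec, htrdiag] at this
    exact this
  have hsq : ∑ v, ν v ^ 2 = ∑ v : V, (G.degree v : ℝ) := by
    have hAA : A * A = U * Matrix.diagonal (fun v => ν v * ν v) * star U := by
      rw [hspec, ← Matrix.diagonal_mul_diagonal]
      calc U * Matrix.diagonal ν * star U * (U * Matrix.diagonal ν * star U)
          = U * (Matrix.diagonal ν * ((star U * U) * (Matrix.diagonal ν * star U))) := by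
            simp only [Matrix.mul_assoc]
        _ = U * (Matrix.diagonal ν * Matrix.diagonal ν) * star U := by
            rw [hU2, Matrix.one_mul]; simp only [Matrix.mul_assoc]
    have h1 : Matrix.trace (A * A) = ∑ v, ν v * ν v := by rw [hAA, htrdiag]
    have h2 : Matrix.trace (A * A) = ∑ v : V, (G.degree v : ℝ) := by
      rw [Matrix.trace]
      exact Finset.sum_congr rfl fun v _ => by
        rw [Matrix.diag_apply, hAdef, G.adjMatrix_mul_self_apply_self]
    calc ∑ v, ν v ^ 2 = ∑ v, ν v * ν v := by simp [sq]
      _ = ∑ v : V, (G.degree v : ℝ) := by rw [← h1, h2]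
  constructor
  · simpa using (hkey id).trans htr
  · have := hkey (fun x => x ^ 2)
    simpa using this.trans hsq

open Finset in
private lemma key_contra {N : ℕ} (hN : 1 ≤ N) (d : ℝ) (hd : 0 < d) (μ : Fin N → ℝ)
    (hsum : ∑ i, μ i = 0) (hsq : ∑ i, μ i ^ 2 ≤ d * N)
    (S : Finset (Fin N)) (hcard : N ≤ 2 * S.card)
    (hgt : ∀ i ∈ S, Real.sqrt d < μ i) : False := by
  have hsd : 0 < Real.sqrt d := Real.sqrt_pos.mpr hd
  have hSk : S.card ≤ N := by simpa using Finset.card_le_univ S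
  have hSne : S.Nonempty := Finset.card_pos.mp (by omega)
  have hccard : Sᶜ.card = N - S.card := by simp [Finset.card_compl]
  have hP : (S.card : ℝ) * Real.sqrt d < ∑ i ∈ S, μ i := by
    have := Finset.sum_lt_sum_of_nonempty hSne hgt
    simpa [mul_comm] using this
  have hSsq : (S.card : ℝ) * d < ∑ i ∈ S, μ i ^ 2 := by
    have h : ∀ i ∈ S, d < μ i ^ 2 := fun i hi => by
      have h1 := hgt i hi
      nlinarith [Real.sq_sqrt hd.le, Real.sqrt_nonneg d]
    have := Finset.sum_lt_sum_of_nonempty hSne h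
    simpa [mul_comm] using this
  have hsplit : ∑ i ∈ S, μ i + ∑ i ∈ Sᶜ, μ i = 0 := by
    rw [Finset.sum_add_sum_compl]; exact hsum
  have hsplitsq : ∑ i ∈ S, μ i ^ 2 + ∑ i ∈ Sᶜ, μ i ^ 2 = ∑ i, μ i ^ 2 :=
    Finset.sum_add_sum_compl S _
  by_cases hm0 : Sᶜ.card = 0
  · have hScempty : Sᶜ = ∅ := Finset.card_eq_zero.mp hm0
    rw [hScempty, Finset.sum_empty, add_zero] at hsplit
    have : (0:ℝ) < (S.card : ℝ) * Real.sqrt d := by positivity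
    linarith
  · have hmpos : 0 < (Sᶜ.card : ℝ) := by positivity
    have hCS : (∑ i ∈ Sᶜ, μ i) ^ 2 ≤ (Sᶜ.card : ℝ) * ∑ i ∈ Sᶜ, μ i ^ 2 := by
      simpa using sq_sum_le_card_mul_sum_sq (s := Sᶜ) (f := μ)
    have hkm : (Sᶜ.card : ℝ) ≤ (S.card : ℝ) := by
      have : Sᶜ.card ≤ S.card := by omega
      exact_mod_cast this
    have hP2 : ((S.card : ℝ))^2 * d < (∑ i ∈ S, μ i) ^ 2 := by
      have hb : (0:ℝ) ≤ (S.card : ℝ) * Real.sqrt d := by positivity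
      nlinarith [Real.sq_sqrt hd.le]
    have heq : (∑ i ∈ Sᶜ, μ i) ^ 2 = (∑ i ∈ S, μ i) ^ 2 := by
      have : ∑ i ∈ Sᶜ, μ i = -(∑ i ∈ S, μ i) := by linarith
      rw [this]; ring
    have hSc : (Sᶜ.card : ℝ) * d < ∑ i ∈ Sᶜ, μ i ^ 2 := by
      have h1 : (Sᶜ.card : ℝ) * ((Sᶜ.card : ℝ) * d) < (Sᶜ.card : ℝ) * ∑ i ∈ Sᶜ, μ i ^ 2 := by
        have hmm : (Sᶜ.card : ℝ) * (Sᶜ.card : ℝ) ≤ ((S.card : ℝ))^2 := by nlinarith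
        calc (Sᶜ.card : ℝ) * ((Sᶜ.card : ℝ) * d) ≤ ((S.card : ℝ))^2 * d := by nlinarith
          _ < (∑ i ∈ S, μ i) ^ 2 := hP2
          _ = (∑ i ∈ Sᶜ, μ i) ^ 2 := heq.symm
          _ ≤ (Sᶜ.card : ℝ) * ∑ i ∈ Sᶜ, μ i ^ 2 := hCS
      exact lt_of_mul_lt_mul_left h1 hmpos.le
    have hNcast : (S.card : ℝ) + (Sᶜ.card : ℝ) = (N : ℝ) := by
      have : S.card + Sᶜ.card = N := by omega
      exact_mod_cast this
    nlinarith

open Finset in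
private lemma median_bound {N : ℕ} (hN : 1 ≤ N) (d : ℝ) (hd : 0 < d) (μ : Fin N → ℝ)
    (hanti : Antitone μ) (hsum : ∑ i, μ i = 0) (hsq : ∑ i, μ i ^ 2 ≤ d * N) (K : Fin N)
    (h1 : N ≤ 2 * ((K : ℕ) + 1)) (h2 : N ≤ 2 * (N - (K : ℕ))) :
    |μ K| ≤ Real.sqrt d := by
  by_contra habs
  rcases lt_abs.mp (not_le.mp habs) with h | h
  · exact key_contra hN d hd μ hsum hsq (Finset.Iic K) (by rw [Fin.card_Iic]; omega)
      (fun i hi => lt_of_lt_of_le h (hanti (Finset.mem_Iic.mp hi)))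
  · refine key_contra hN d hd (fun i => -μ i) ?_ ?_ (Finset.Ici K)
      (by rw [Fin.card_Ici]; omega) ?_
    · rw [Finset.sum_neg_distrib, hsum, neg_zero]
    · simpa only [neg_sq] using hsq
    · intro i hi
      have hmono := hanti (Finset.mem_Ici.mp hi)
      show Real.sqrt d < -μ i
      linarith

open Polynomial in
/-- `μ` is the sequence of adjacency eigenvalues of `G`, listed with multiplicity
in decreasing order (so `μ ⟨i-1,_⟩` is the `i`-th largest eigenvalue `λ_i`). -/
def SimpleGraph.IsEigenvalueSeq {V : Type*} [Fintype V] [DecidableEq V]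
    (G : SimpleGraph V) (μ : Fin (Fintype.card V) → ℝ) : Prop :=
  Antitone μ ∧
    (letI : DecidableRel G.Adj := Classical.decRel _
     (SimpleGraph.adjMatrix ℝ G).charpoly) =
      ∏ i : Fin (Fintype.card V), (X - C (μ i))

/-- If `G` is a graph on `n ≥ 1` vertices whose degree sum is at most `d·n`
(for a real `d > 0`), then both median eigenvalues `λ_H` and `λ_L`
(where `H = ⌊(n+1)/2⌋` and `L = ⌈(n+1)/2⌉`, i.e. 0-indexed positions `(n-1)/2` and `n/2`)
have absolute value at most `√d`; that is, `R(G) ≤ √d`. -/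
theorem hl_index_le_sqrt_average_degree
    {V : Type*} [Fintype V] [DecidableEq V] (G : SimpleGraph V) [DecidableRel G.Adj]
    (n : ℕ) (hn : n = Fintype.card V) (hn1 : 1 ≤ n)
    (d : ℝ) (hd : 0 < d)
    (hdegsum : (∑ v : V, (G.degree v : ℝ)) ≤ d * n)
    (μ : Fin (Fintype.card V) → ℝ) (hμ : G.IsEigenvalueSeq μ)
    (H L : Fin (Fintype.card V))
    (hH : (H : ℕ) = (n - 1) / 2) (hL : (L : ℕ) = n / 2) :
    |μ H| ≤ Real.sqrt d ∧ |μ L| ≤ Real.sqrt d := by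
  obtain ⟨hanti, hch0⟩ := hμ
  have hAeq : (letI : DecidableRel G.Adj := Classical.decRel _
      SimpleGraph.adjMatrix ℝ G) = SimpleGraph.adjMatrix ℝ G := by congr!
  rw [hAeq] at hch0
  obtain ⟨hsum, hsqeq⟩ := eig_facts G μ hch0
  have hNn : 1 ≤ Fintype.card V := by omega
  have hsq : ∑ i, μ i ^ 2 ≤ d * (Fintype.card V : ℝ) := by
    rw [hsqeq, ← hn]
    exact hdegsum
  have hHlt := H.isLt
  have hLlt := L.isLt
  exact ⟨median_bound hNn d hd μ hanti hsum hsq H (by omega) (by omega),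
    median_bound hNn d hd μ hanti hsum hsq L (by omega) (by omega)⟩
end

section
/- Let G be a subcubic graph (maximum degree at most 3) and let {A, B} be a partition of V(G) with |A| < |B| such that every connected component of each induced subgraph G[A] and G[B] is a path on at most 3 vertices. Then R(G) ≤ √2; more precisely, λ_H(G) ≤ √2 and λ_L(G) ≥ −√2. -/
/-- Every connected component of the subgraph of `G` induced on `A` is a path on at
most 3 vertices (i.e. a path of length at most 2). -/
def SimpleGraph.IsNiceSide {V : Type*} (G : SimpleGraph V) (A : Set V) : Prop :=
  ∀ c : (G.induce A).ConnectedComponent,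
    ∃ m : ℕ, m ≤ 3 ∧ Nonempty ((G.induce A).induce c.supp ≃g SimpleGraph.pathGraph m)

/-- `{A, B}` is a nice partition of `V(G)`: it is a partition of the vertex set and
every connected component of each of the induced subgraphs `G[A]`, `G[B]` is a path
on at most 3 vertices. -/
def SimpleGraph.IsNicePartition {V : Type*} (G : SimpleGraph V) (A B : Set V) : Prop :=
  A ∪ B = Set.univ ∧ A ∩ B = ∅ ∧ G.IsNiceSide A ∧ G.IsNiceSide B

open Module Finset Matrix Polynomial
open scoped RealInnerProductSpace

theorem Module.Basis.exists_mem_ne_zero_forall_repr_eq_zero {K V ι : Type*} [Field K]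
    [AddCommGroup V] [Module K V] [Fintype ι] (b : Basis ι K V) (U : Submodule K V)
    [FiniteDimensional K U] (S : Finset ι) (h : Fintype.card ι < #S + finrank K U) :
    ∃ x ∈ U, x ≠ 0 ∧ ∀ j ∉ S, b.repr x j = 0 := by
  classical
  let f : U →ₗ[K] (↥(Sᶜ : Finset ι) → K) :=
    (LinearMap.pi fun j : ↥(Sᶜ : Finset ι) => b.coord j).comp U.subtype
  have hker : LinearMap.ker f ≠ ⊥ := f.ker_ne_bot_of_finrank_lt <| by
    rw [Module.finrank_fintype_fun_eq_card, Fintype.card_coe, card_compl]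
    have := card_le_univ S
    omega
  obtain ⟨⟨x, hxU⟩, hx, hx0⟩ := Submodule.exists_mem_ne_zero_of_ne_bot hker
  refine ⟨x, hxU, fun h => hx0 (by simp [h]), fun j hj => ?_⟩
  simpa [f] using congrFun (LinearMap.mem_ker.mp hx) ⟨j, mem_compl.mpr hj⟩

theorem Finset.sum_mul_sq_pos {ι : Type*} [Fintype ι] {f r : ι → ℝ}
    (hf : ∀ j, r j ≠ 0 → 0 < f j) (hr : r ≠ 0) : 0 < ∑ j, f j * r j ^ 2 := by
  obtain ⟨j, hj⟩ := Function.ne_iff.mp hr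
  refine sum_pos' (fun i _ => ?_) ⟨j, mem_univ j, mul_pos (hf j hj) (pow_two_pos_of_ne_zero hj)⟩
  by_cases hi : r i = 0
  · simp [hi]
  · exact (mul_pos (hf i hi) (pow_two_pos_of_ne_zero hi)).le

theorem OrthonormalBasis.norm_sq_eq_sum_repr_sq {ι E : Type*} [Fintype ι]
    [NormedAddCommGroup E] [InnerProductSpace ℝ E] (b : OrthonormalBasis ι ℝ E) (x : E) :
    ‖x‖ ^ 2 = ∑ i, b.repr x i ^ 2 := by
  simp [← b.sum_sq_inner_right, OrthonormalBasis.repr_apply_apply]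

namespace LinearMap.IsSymmetric

variable {E : Type*} [NormedAddCommGroup E] [InnerProductSpace ℝ E] [FiniteDimensional ℝ E]
  {T : E →ₗ[ℝ] E} {n : ℕ}

theorem inner_apply_self_eq_sum (hT : T.IsSymmetric) (hn : finrank ℝ E = n) (x : E) :
    ⟪T x, x⟫ = ∑ i, hT.eigenvalues hn i * (hT.eigenvectorBasis hn).repr x i ^ 2 := by
  rw [← (hT.eigenvectorBasis hn).sum_inner_mul_inner]
  refine sum_congr rfl fun i _ => ?_
  rw [real_inner_comm, ← OrthonormalBasis.repr_apply_apply, ← OrthonormalBasis.repr_apply_apply,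
    hT.eigenvectorBasis_apply_self_apply, RCLike.ofReal_real_eq_id, _root_.id]
  ring

theorem exists_mem_ne_zero_forall_repr_eq_zero (hT : T.IsSymmetric) (hn : finrank ℝ E = n)
    (U : Submodule ℝ E) (S : Finset (Fin n)) (h : n < #S + finrank ℝ U) :
    ∃ x ∈ U, x ≠ 0 ∧ ∀ j ∉ S, (hT.eigenvectorBasis hn).repr x j = 0 := by
  simpa using (hT.eigenvectorBasis hn).toBasis.exists_mem_ne_zero_forall_repr_eq_zero U S
    (by simpa using h)

/-- The easy half of the Courant–Fischer minimax principle. -/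
theorem eigenvalues_le_of_forall_inner_le (hT : T.IsSymmetric) (hn : finrank ℝ E = n)
    {U : Submodule ℝ E} {c : ℝ} (hU : ∀ x ∈ U, ⟪T x, x⟫ ≤ c * ‖x‖ ^ 2) {i : Fin n}
    (hi : n ≤ i + finrank ℝ U) : hT.eigenvalues hn i ≤ c := by
  by_contra! hci
  obtain ⟨x, hxU, hx0, hx⟩ := hT.exists_mem_ne_zero_forall_repr_eq_zero hn U (Iic i)
    (by rw [Fin.card_Iic]; omega)
  have hpos : 0 < ∑ j, (hT.eigenvalues hn j - c) * (hT.eigenvectorBasis hn).repr x j ^ 2 := by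
    refine sum_mul_sq_pos (fun j hj => ?_) (by simpa using hx0)
    have hji : j ≤ i := by simpa using not_imp_comm.mp (hx j) hj
    linarith [hT.eigenvalues_antitone hn hji]
  have hq := hU x hxU
  rw [hT.inner_apply_self_eq_sum hn, (hT.eigenvectorBasis hn).norm_sq_eq_sum_repr_sq,
    mul_sum] at hq
  simp only [sub_mul, sum_sub_distrib] at hpos
  linarith

theorem le_eigenvalues_of_forall_le_inner (hT : T.IsSymmetric) (hn : finrank ℝ E = n)
    {U : Submodule ℝ E} {c : ℝ} (hU : ∀ x ∈ U, c * ‖x‖ ^ 2 ≤ ⟪T x, x⟫) {i : Fin n}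
    (hi : i < finrank ℝ U) : c ≤ hT.eigenvalues hn i := by
  by_contra! hci
  obtain ⟨x, hxU, hx0, hx⟩ := hT.exists_mem_ne_zero_forall_repr_eq_zero hn U (Ici i)
    (by rw [Fin.card_Ici]; omega)
  have hpos : 0 < ∑ j, (c - hT.eigenvalues hn j) * (hT.eigenvectorBasis hn).repr x j ^ 2 := by
    refine sum_mul_sq_pos (fun j hj => ?_) (by simpa using hx0)
    have hij : i ≤ j := by simpa using not_imp_comm.mp (hx j) hj
    linarith [hT.eigenvalues_antitone hn hij]
  have hq := hU x hxU
  rw [hT.inner_apply_self_eq_sum hn, (hT.eigenvectorBasis hn).norm_sq_eq_sum_repr_sq,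
    mul_sum] at hq
  simp only [sub_mul, sum_sub_distrib] at hpos
  linarith

end LinearMap.IsSymmetric

theorem EuclideanSpace.exists_finrank_eq_ncard_forall_apply_eq_zero {n : Type*} [Fintype n]
    (s : Set n) : ∃ U : Submodule ℝ (EuclideanSpace ℝ n),
      finrank ℝ U = s.ncard ∧ ∀ x ∈ U, ∀ v ∉ s, x v = 0 :=
  ⟨(Pi.spanSubset ℝ s).map (WithLp.linearEquiv 2 ℝ (n → ℝ)).symm.toLinearMap,
    by rw [LinearEquiv.finrank_map_eq, Pi.dim_spanSubset],
    fun x hx => by simpa [Pi.mem_spanSubset_iff] using hx⟩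

theorem EuclideanSpace.real_norm_sq_eq_dotProduct {n : Type*} [Fintype n]
    (x : EuclideanSpace ℝ n) : ‖x‖ ^ 2 = x.ofLp ⬝ᵥ x.ofLp := by
  rw [← real_inner_self_eq_norm_sq, EuclideanSpace.inner_eq_star_dotProduct]
  simp

namespace Matrix

section Submatrix

variable {ι κ R : Type*} [Fintype ι] [Fintype κ] [NonUnitalNonAssocSemiring R]
  {f : κ → ι} {x : ι → R}

theorem comp_dotProduct_comp_of_injective_left (hf : f.Injective)
    (hx : ∀ i ∉ Set.range f, x i = 0) (y : ι → R) : (x ∘ f) ⬝ᵥ (y ∘ f) = x ⬝ᵥ y :=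
  Fintype.sum_of_injective f hf _ _ (fun i hi => by simp [hx i hi]) fun _ => rfl

theorem comp_dotProduct_comp_of_injective_right (hf : f.Injective)
    (hx : ∀ i ∉ Set.range f, x i = 0) (y : ι → R) : (y ∘ f) ⬝ᵥ (x ∘ f) = y ⬝ᵥ x :=
  Fintype.sum_of_injective f hf _ _ (fun i hi => by simp [hx i hi]) fun _ => rfl

theorem submatrix_mulVec_comp_of_injective (M : Matrix ι ι R) (hf : f.Injective)
    (hx : ∀ i ∉ Set.range f, x i = 0) : M.submatrix f f *ᵥ (x ∘ f) = (M *ᵥ x) ∘ f := by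
  ext k
  exact comp_dotProduct_comp_of_injective_right hf hx (M (f k))

theorem comp_dotProduct_submatrix_mulVec_comp_of_injective (M : Matrix ι ι R)
    (hf : f.Injective) (hx : ∀ i ∉ Set.range f, x i = 0) :
    (x ∘ f) ⬝ᵥ M.submatrix f f *ᵥ (x ∘ f) = x ⬝ᵥ M *ᵥ x := by
  rw [submatrix_mulVec_comp_of_injective M hf hx, comp_dotProduct_comp_of_injective_left hf hx]

end Submatrix

variable {n : Type*} [Fintype n] [DecidableEq n]

theorem inner_toEuclideanLin_self (A : Matrix n n ℝ) (x : EuclideanSpace ℝ n) :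
    ⟪toEuclideanLin A x, x⟫ = x.ofLp ⬝ᵥ A *ᵥ x.ofLp := by
  simp [EuclideanSpace.inner_eq_star_dotProduct]

namespace IsHermitian

variable {A : Matrix n n ℝ}

theorem eigenvalues₀_eq_of_charpoly_eq (hA : A.IsHermitian) {μ : Fin (Fintype.card n) → ℝ}
    (hμ : Antitone μ) (h : A.charpoly = ∏ i, (X - C (μ i))) : hA.eigenvalues₀ = μ := by
  apply List.ofFn_injective
  rw [← hA.sort_roots_charpoly_eq_eigenvalues₀, h,
    roots_prod _ _ (prod_ne_zero_iff.mpr fun i _ => X_sub_C_ne_zero _)]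
  simp_rw [roots_X_sub_C, Multiset.bind_singleton, Fin.univ_val_map, Multiset.map_coe,
    List.map_ofFn, Multiset.coe_sort, RCLike.re_to_real]
  apply List.mergeSort_of_pairwise
  simp_rw [decide_eq_true_eq, ← List.sortedGE_iff_pairwise]
  exact hμ.sortedGE_ofFn

theorem eigenvalues₀_le_of_forall_dotProduct_mulVec_le (hA : A.IsHermitian) {s : Set n}
    {c : ℝ} (hs : ∀ x : n → ℝ, (∀ v ∉ s, x v = 0) → x ⬝ᵥ A *ᵥ x ≤ c * (x ⬝ᵥ x))
    {i : Fin (Fintype.card n)} (hi : Fintype.card n ≤ i + s.ncard) : hA.eigenvalues₀ i ≤ c := by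
  obtain ⟨U, hU, hUs⟩ := EuclideanSpace.exists_finrank_eq_ncard_forall_apply_eq_zero s
  refine (isSymmetric_toEuclideanLin_iff.mpr hA).eigenvalues_le_of_forall_inner_le
    finrank_euclideanSpace (U := U) (fun x hx => ?_) (by rwa [hU])
  rw [inner_toEuclideanLin_self, EuclideanSpace.real_norm_sq_eq_dotProduct]
  exact hs x (hUs x hx)

theorem le_eigenvalues₀_of_forall_le_dotProduct_mulVec (hA : A.IsHermitian) {s : Set n}
    {c : ℝ} (hs : ∀ x : n → ℝ, (∀ v ∉ s, x v = 0) → c * (x ⬝ᵥ x) ≤ x ⬝ᵥ A *ᵥ x)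
    {i : Fin (Fintype.card n)} (hi : i < s.ncard) : c ≤ hA.eigenvalues₀ i := by
  obtain ⟨U, hU, hUs⟩ := EuclideanSpace.exists_finrank_eq_ncard_forall_apply_eq_zero s
  refine (isSymmetric_toEuclideanLin_iff.mpr hA).le_eigenvalues_of_forall_le_inner
    finrank_euclideanSpace (U := U) (fun x hx => ?_) (by rwa [hU])
  rw [inner_toEuclideanLin_self, EuclideanSpace.real_norm_sq_eq_dotProduct]
  exact hs x (hUs x hx)

end IsHermitian

end Matrix

-- The adjacency form of the path `a - b - c` is `2 b (a + c)`.
theorem abs_two_mul_mul_add_le (a b c : ℝ) :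
    |2 * b * (a + c)| ≤ √2 * (a ^ 2 + b ^ 2 + c ^ 2) := by
  have hs : √2 * √2 = 2 := Real.mul_self_sqrt zero_le_two
  have hs0 : 0 < √2 := by positivity
  rw [abs_le]
  constructor <;>
    nlinarith [sq_nonneg (√2 * b - (a + c)), sq_nonneg (√2 * b + (a + c)), sq_nonneg (a - c)]

namespace SimpleGraph

variable {V W R : Type*} [Fintype V] [Fintype W] {G : SimpleGraph V} [DecidableRel G.Adj]
  {G' : SimpleGraph W} [DecidableRel G'.Adj]

theorem Embedding.dotProduct_adjMatrix_mulVec_comp [NonAssocSemiring R] (f : G' ↪g G)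
    {x : V → R} (hx : ∀ v ∉ Set.range f, x v = 0) :
    (x ∘ f) ⬝ᵥ G'.adjMatrix R *ᵥ (x ∘ f) = x ⬝ᵥ G.adjMatrix R *ᵥ x := by
  rw [← f.submatrix_adjMatrix R]
  exact comp_dotProduct_submatrix_mulVec_comp_of_injective _ f.injective hx

theorem dotProduct_eq_sum_connectedComponent [NonUnitalNonAssocSemiring R] [DecidableEq V]
    (x : V → R) :
    x ⬝ᵥ x = ∑ C : G.ConnectedComponent, C.supp.indicator x ⬝ᵥ C.supp.indicator x := by
  simp only [dotProduct]
  rw [sum_comm]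
  refine sum_congr rfl fun v _ => ?_
  rw [sum_eq_single (G.connectedComponentMk v)]
  · simp
  · intro C _ hC
    simp [Set.indicator, ConnectedComponent.mem_supp_iff, Ne.symm hC]
  · simp

theorem dotProduct_adjMatrix_mulVec_eq_sum_connectedComponent [NonAssocSemiring R] [DecidableEq V]
    (x : V → R) : x ⬝ᵥ G.adjMatrix R *ᵥ x =
      ∑ C : G.ConnectedComponent, C.supp.indicator x ⬝ᵥ G.adjMatrix R *ᵥ C.supp.indicator x := by
  simp only [dotProduct_mulVec_adjMatrix]
  conv_rhs => rw [sum_comm]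
  refine sum_congr rfl fun u _ => ?_
  conv_rhs => rw [sum_comm]
  refine sum_congr rfl fun v _ => ?_
  rw [sum_eq_single (G.connectedComponentMk u)]
  · split_ifs with h
    · simp [ConnectedComponent.connectedComponentMk_eq_of_adj h]
    · rfl
  · intro C _ hC
    simp [Set.indicator, ConnectedComponent.mem_supp_iff, Ne.symm hC]
  · simp

theorem abs_dotProduct_adjMatrix_mulVec_le_of_forall_connectedComponent [DecidableEq V] {c : ℝ}
    (h : ∀ C : G.ConnectedComponent, ∀ y : C.supp → ℝ,
      |y ⬝ᵥ (G.induce C.supp).adjMatrix ℝ *ᵥ y| ≤ c * (y ⬝ᵥ y))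
    (x : V → ℝ) : |x ⬝ᵥ G.adjMatrix ℝ *ᵥ x| ≤ c * (x ⬝ᵥ x) := by
  rw [dotProduct_adjMatrix_mulVec_eq_sum_connectedComponent,
    dotProduct_eq_sum_connectedComponent (G := G), mul_sum]
  refine (abs_sum_le_sum_abs _ _).trans (sum_le_sum fun C _ => ?_)
  have hx : ∀ v ∉ Set.range ((↑) : C.supp → V), C.supp.indicator x v = 0 :=
    fun v hv => Set.indicator_of_notMem (by simpa using hv) x
  rw [← (Embedding.induce C.supp).dotProduct_adjMatrix_mulVec_comp (by simpa using hx),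
    ← comp_dotProduct_comp_of_injective_left Subtype.val_injective hx]
  exact h C _

theorem abs_dotProduct_adjMatrix_pathGraph_le {m : ℕ} [DecidableRel (pathGraph m).Adj]
    (hm : m ≤ 3) (y : Fin m → ℝ) :
    |y ⬝ᵥ (pathGraph m).adjMatrix ℝ *ᵥ y| ≤ √2 * (y ⬝ᵥ y) := by
  rw [dotProduct_mulVec_adjMatrix]
  interval_cases m <;>
    simp only [dotProduct, Fin.sum_univ_succ, Fin.sum_univ_zero, pathGraph_adj] <;>
    norm_num [Fin.ext_iff]
  · exact mul_self_nonneg _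
  · convert abs_two_mul_mul_add_le (y 0) (y 1) 0 using 2 <;> ring
  · convert abs_two_mul_mul_add_le (y 0) (y 1) (y 2) using 2 <;> ring

theorem IsNiceSide.abs_dotProduct_adjMatrix_mulVec_le {B : Set V} (hB : G.IsNiceSide B)
    {x : V → ℝ} (hx : ∀ v ∉ B, x v = 0) : |x ⬝ᵥ G.adjMatrix ℝ *ᵥ x| ≤ √2 * (x ⬝ᵥ x) := by
  classical
  have hx' : ∀ v ∉ Set.range ((↑) : B → V), x v = 0 := by simpa using hx
  rw [← (Embedding.induce B).dotProduct_adjMatrix_mulVec_comp hx',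
    ← comp_dotProduct_comp_of_injective_left Subtype.val_injective hx']
  refine abs_dotProduct_adjMatrix_mulVec_le_of_forall_connectedComponent (fun C y => ?_) _
  obtain ⟨m, hm, ⟨e⟩⟩ := hB C
  have hy : ∀ v ∉ Set.range e.symm, y v = 0 := fun v hv => (hv (e.symm.surjective v)).elim
  rw [← e.symm.toEmbedding.dotProduct_adjMatrix_mulVec_comp hy,
    ← comp_dotProduct_comp_of_injective_left e.symm.injective hy]
  exact abs_dotProduct_adjMatrix_pathGraph_le hm _

theorem IsEigenvalueSeq.eq_eigenvalues₀ [DecidableEq V] {μ : Fin (Fintype.card V) → ℝ}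
    (hμ : G.IsEigenvalueSeq μ) (hA : (G.adjMatrix ℝ).IsHermitian) : μ = hA.eigenvalues₀ :=
  (hA.eigenvalues₀_eq_of_charpoly_eq hμ.1 (by convert hμ.2)).symm

end SimpleGraph

theorem hl_index_le_sqrt_two_of_unbalanced_nice_partition_general
    {V : Type*} [Fintype V] [DecidableEq V] (G : SimpleGraph V)
    (A B : Set V) (hnice : G.IsNicePartition A B) (hunbal : A.ncard < B.ncard)
    (μ : Fin (Fintype.card V) → ℝ) (hμ : G.IsEigenvalueSeq μ)
    (H L : Fin (Fintype.card V))
    (hH : (H : ℕ) = (Fintype.card V - 1) / 2) (hL : (L : ℕ) = Fintype.card V / 2) :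
    μ H ≤ Real.sqrt 2 ∧ -Real.sqrt 2 ≤ μ L ∧ max |μ H| |μ L| ≤ Real.sqrt 2 := by
  classical
  obtain ⟨hcover, hdisj, -, hB⟩ := hnice
  have hherm := G.isHermitian_adjMatrix ℝ
  have hμA : μ = hherm.eigenvalues₀ := hμ.eq_eigenvalues₀ hherm
  have hcard : A.ncard + B.ncard = Fintype.card V := by
    rw [← Set.ncard_union_eq (Set.disjoint_iff_inter_eq_empty.mpr hdisj), hcover, Set.ncard_univ,
      Nat.card_eq_fintype_card]
  have hup : μ H ≤ √2 := hμA ▸ hherm.eigenvalues₀_le_of_forall_dotProduct_mulVec_le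
    (fun x hx => (le_abs_self _).trans (hB.abs_dotProduct_adjMatrix_mulVec_le hx)) (by omega)
  have hlow : -√2 ≤ μ L := hμA ▸ hherm.le_eigenvalues₀_of_forall_le_dotProduct_mulVec
    (fun x hx => by
      linarith [neg_abs_le (x ⬝ᵥ G.adjMatrix ℝ *ᵥ x), hB.abs_dotProduct_adjMatrix_mulVec_le hx])
    (by omega)
  have hLH : μ L ≤ μ H := hμ.1 (Fin.le_def.mpr (by omega))
  exact ⟨hup, hlow, max_le (abs_le.mpr ⟨by linarith, hup⟩) (abs_le.mpr ⟨hlow, by linarith⟩)⟩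

/-- If a subcubic graph `G` has a nice partition `{A, B}` with
`|A| < |B|` (an unbalanced nice partition), then `λ_H(G) ≤ √2` and `λ_L(G) ≥ -√2`,
so `R(G) = max (|λ_H|, |λ_L|) ≤ √2`.  Here `H = ⌊(n+1)/2⌋`, `L = ⌈(n+1)/2⌉`
(0-indexed positions `(n-1)/2` and `n/2`). -/
theorem hl_index_le_sqrt_two_of_unbalanced_nice_partition
    {V : Type*} [Fintype V] [DecidableEq V] (G : SimpleGraph V) [DecidableRel G.Adj]
    (hdeg : ∀ v : V, G.degree v ≤ 3)
    (A B : Set V) (hnice : G.IsNicePartition A B) (hunbal : A.ncard < B.ncard)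
    (μ : Fin (Fintype.card V) → ℝ) (hμ : G.IsEigenvalueSeq μ)
    (H L : Fin (Fintype.card V))
    (hH : (H : ℕ) = (Fintype.card V - 1) / 2) (hL : (L : ℕ) = Fintype.card V / 2) :
    μ H ≤ Real.sqrt 2 ∧ -Real.sqrt 2 ≤ μ L ∧ max |μ H| |μ L| ≤ Real.sqrt 2 :=
  hl_index_le_sqrt_two_of_unbalanced_nice_partition_general G A B hnice hunbal μ hμ H L hH hL
end

section
/- For every positive integer k, the disjoint union G of k copies of the Heawood graph is a 3-regular graph on n = 14k vertices whose eigenvalues λ_i(G) satisfy |λ_i(G)| = √2 for all indices i with k+1 ≤ i ≤ 13k; in particular λ_H(G) = √2 and λ_L(G) = −√2, so the constant √2 in the preceding interval statement cannot be replaced by any smaller number. -/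
/-- The Heawood graph: the bipartite point–line incidence graph of the Fano plane
`PG(2,2)`.  Points and lines are indexed by `ZMod 7`; the line `l` consists of the
points `{l, l+1, l+3}` (the set `{0,1,3}` is a perfect difference set mod 7). -/
def heawoodGraph : SimpleGraph (ZMod 7 ⊕ ZMod 7) :=
  SimpleGraph.fromRel (fun x y =>
    match x, y with
    | Sum.inl p, Sum.inr l => p - l = 0 ∨ p - l = 1 ∨ p - l = 3
    | _, _ => False)

/-- The disjoint union of `k` copies of the Heawood graph. -/
def kHeawood (k : ℕ) : SimpleGraph (Fin k × (ZMod 7 ⊕ ZMod 7)) where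
  Adj x y := x.1 = y.1 ∧ heawoodGraph.Adj x.2 y.2
  symm := ⟨fun _ _ h => ⟨h.1.symm, h.2.symm⟩⟩
  loopless := ⟨fun x h => heawoodGraph.loopless.irrefl x.2 h.2⟩

noncomputable instance (k : ℕ) : DecidableRel (kHeawood k).Adj := Classical.decRel _

/-! The adjacency matrix `A` of the Heawood graph satisfies `(A² - 2)(A² - 9) = 0`, hence so does
the block-diagonal adjacency matrix of `k` disjoint copies, and every eigenvalue lies in
`{±3, ±√2}`. Since `√2` is irrational, `tr A = 0` forces `3` and `-3`, and likewise `√2` and `-√2`,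
to occur equally often; `tr A² = 3n` then gives multiplicity `k` to `±3` and `6k` to `±√2`. In
decreasing order the eigenvalues in positions `k+1, …, 7k` are `√2` and those in positions
`7k+1, …, 13k` are `-√2`. -/

open Polynomial Finset Real

theorem Matrix.isRoot_of_aeval_eq_zero_of_isRoot_charpoly {n K : Type*} [Fintype n]
    [DecidableEq n] [Field K] {A : Matrix n n K} {p : K[X]} (hp : aeval A p = 0) {t : K}
    (ht : A.charpoly.IsRoot t) : p.IsRoot t := by
  have hmem := spectrum.subset_polynomial_aeval A p ⟨t, mem_spectrum_of_isRoot_charpoly ht, rfl⟩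
  rw [hp] at hmem
  rcases subsingleton_or_nontrivial (Matrix n n K) with _ | _
  · simp [spectrum.of_subsingleton] at hmem
  · simpa [spectrum.zero_eq] using hmem

theorem Matrix.IsHermitian.trace_mul_self {n 𝕜 : Type*} [Fintype n] [DecidableEq n] [RCLike 𝕜]
    {A : Matrix n n 𝕜} (hA : A.IsHermitian) :
    (A * A).trace = ∑ i, (hA.eigenvalues i : 𝕜) ^ 2 := by
  conv_lhs => rw [hA.spectral_theorem, ← map_mul, Unitary.conjStarAlgAut_apply, mul_assoc,
    trace_mul_comm, mul_assoc, Unitary.coe_star_mul_self, mul_one, diagonal_mul_diagonal,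
    trace_diagonal]
  simp [sq]

theorem Polynomial.roots_prod_X_sub_C_apply {R ι : Type*} [CommRing R] [IsDomain R] [Fintype ι]
    (μ : ι → R) : (∏ i, (X - C (μ i))).roots = univ.val.map μ := by
  have h := roots_multiset_prod_X_sub_C (univ.val.map μ)
  rwa [Multiset.map_map] at h

theorem Polynomial.sum_comp_eq_of_prod_X_sub_C_eq {R ι κ M : Type*} [CommRing R] [IsDomain R]
    [Fintype ι] [Fintype κ] [AddCommMonoid M] {μ : ι → R} {ν : κ → R}
    (h : ∏ i, (X - C (μ i)) = ∏ j, (X - C (ν j))) (f : R → M) :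
    ∑ i, f (μ i) = ∑ j, f (ν j) := by
  have hroots := congrArg (fun p => (p.roots.map f).sum) h
  simp only [roots_prod_X_sub_C_apply, Multiset.map_map] at hroots
  exact hroots

theorem Finset.sum_comp_eq_sum_card_smul {ι α M : Type*} [DecidableEq α] [AddCommMonoid M]
    {s : Finset ι} {t : Finset α} {g : ι → α} (h : ∀ i ∈ s, g i ∈ t) (f : α → M) :
    ∑ i ∈ s, f (g i) = ∑ a ∈ t, #{i ∈ s | g i = a} • f a := by
  rw [← sum_fiberwise_of_maps_to h]
  refine sum_congr rfl fun a _ => ?_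
  rw [sum_congr rfl fun i hi => by rw [(mem_filter.1 hi).2], sum_const]

theorem Antitone.le_apply_iff_lt_card {α : Type*} [LinearOrder α] {N : ℕ} {μ : Fin N → α}
    (hμ : Antitone μ) (c : α) (i : Fin N) : c ≤ μ i ↔ (i : ℕ) < #{j | c ≤ μ j} := by
  constructor
  · intro hi
    have hsub : Iic i ⊆ ({j | c ≤ μ j} : Finset (Fin N)) := fun j hj =>
      mem_filter.2 ⟨mem_univ j, hi.trans (hμ (mem_Iic.1 hj))⟩
    simpa using card_le_card hsub
  · intro hlt
    by_contra hi
    have hsub : ({j | c ≤ μ j} : Finset (Fin N)) ⊆ Iio i := fun j hj =>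
      mem_Iio.2 (lt_of_not_ge fun hij => hi ((mem_filter.1 hj).2.trans (hμ hij)))
    simpa using (card_le_card hsub).trans_lt' hlt

namespace SimpleGraph

variable {V : Type*} [Fintype V] [DecidableEq V] {G : SimpleGraph V} [DecidableRel G.Adj]
  {μ : Fin (Fintype.card V) → ℝ}

theorem IsEigenvalueSeq.charpoly_adjMatrix (hμ : G.IsEigenvalueSeq μ) :
    (G.adjMatrix ℝ).charpoly = ∏ i, (X - C (μ i)) := by
  convert hμ.2

theorem IsEigenvalueSeq.sum_comp_eq_sum_eigenvalues (hμ : G.IsEigenvalueSeq μ) (f : ℝ → ℝ) :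
    ∑ i, f (μ i) = ∑ v, f ((G.isHermitian_adjMatrix ℝ).eigenvalues v) :=
  sum_comp_eq_of_prod_X_sub_C_eq
    (hμ.charpoly_adjMatrix.symm.trans (G.isHermitian_adjMatrix ℝ).charpoly_eq) f

theorem IsEigenvalueSeq.sum_eq_zero (hμ : G.IsEigenvalueSeq μ) : ∑ i, μ i = 0 := by
  have htrace := (G.isHermitian_adjMatrix ℝ).trace_eq_sum_eigenvalues
  simp only [trace_adjMatrix, RCLike.ofReal_real_eq_id, id] at htrace
  have h := hμ.sum_comp_eq_sum_eigenvalues id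
  simp only [id] at h
  rw [h, htrace]

theorem IsEigenvalueSeq.sum_sq_eq_sum_degree (hμ : G.IsEigenvalueSeq μ) :
    ∑ i, μ i ^ 2 = ∑ v, (G.degree v : ℝ) := by
  have htrace := (G.isHermitian_adjMatrix ℝ).trace_mul_self
  simp only [Matrix.trace, Matrix.diag_apply, adjMatrix_mul_self_apply_self,
    RCLike.ofReal_real_eq_id, id] at htrace
  rw [hμ.sum_comp_eq_sum_eigenvalues (· ^ 2), htrace]

theorem IsEigenvalueSeq.isRoot (hμ : G.IsEigenvalueSeq μ) {p : ℝ[X]}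
    (hp : aeval (G.adjMatrix ℝ) p = 0) (i : Fin (Fintype.card V)) : p.IsRoot (μ i) := by
  refine Matrix.isRoot_of_aeval_eq_zero_of_isRoot_charpoly hp ?_
  rw [hμ.charpoly_adjMatrix, IsRoot, eval_prod]
  exact prod_eq_zero (mem_univ i) (by simp)

end SimpleGraph

noncomputable def heawoodEigenvalues : Finset ℝ := {3, √2, -√2, -3}

theorem mem_heawoodEigenvalues_of_isRoot {t : ℝ}
    (ht : ((X ^ 2 - 2) * (X ^ 2 - 9) : ℝ[X]).IsRoot t) : t ∈ heawoodEigenvalues := by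
  have h : (t ^ 2 - 2) * (t ^ 2 - 9) = 0 := by simpa using ht
  have h' : t ^ 2 = √2 ^ 2 ∨ t ^ 2 = 3 ^ 2 := by
    rw [sq_sqrt zero_le_two]
    rcases mul_eq_zero.1 h with h | h
    · left; linarith
    · right; linarith
  simp only [heawoodEigenvalues, mem_insert, mem_singleton]
  rcases h' with h' | h' <;> rcases sq_eq_sq_iff_eq_or_eq_neg.1 h' with rfl | rfl <;> simp

section HeawoodEigenvalues

variable {ι : Type*} [Fintype ι] {μ : ι → ℝ}

theorem sum_comp_of_forall_mem_heawoodEigenvalues (hμ : ∀ i, μ i ∈ heawoodEigenvalues)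
    (f : ℝ → ℝ) :
    ∑ i, f (μ i) = #{i | μ i = 3} * f 3 + #{i | μ i = √2} * f √2 +
      #{i | μ i = -√2} * f (-√2) + #{i | μ i = -3} * f (-3) := by
  have h1 := one_lt_sqrt_two
  have h2 := sqrt_two_lt_three_halves
  have h3 : (3 : ℝ) ∉ ({√2, -√2, -3} : Finset ℝ) := by
    simp only [mem_insert, mem_singleton]
    rintro (h | h | h) <;> linarith
  have hs : √2 ∉ ({-√2, -3} : Finset ℝ) := by
    simp only [mem_insert, mem_singleton]
    rintro (h | h) <;> linarith
  rw [sum_comp_eq_sum_card_smul fun i _ => hμ i, heawoodEigenvalues, sum_insert h3, sum_insert hs,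
    sum_pair (by linarith)]
  simp only [nsmul_eq_mul]
  ring

theorem card_filter_le_of_forall_mem_heawoodEigenvalues {k : ℕ}
    (hμ : ∀ i, μ i ∈ heawoodEigenvalues) (hcard : Fintype.card ι = 14 * k)
    (htrace : ∑ i, μ i = 0) (htrace_sq : ∑ i, μ i ^ 2 = 42 * k) :
    #{i | 3 ≤ μ i} = k ∧ #{i | √2 ≤ μ i} = 7 * k ∧ #{i | -√2 ≤ μ i} = 13 * k := by
  have hsum := sum_comp_of_forall_mem_heawoodEigenvalues hμ
  set a : ℝ := ((#{i | μ i = 3} : ℕ) : ℝ)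
  set b : ℝ := ((#{i | μ i = √2} : ℕ) : ℝ)
  set c : ℝ := ((#{i | μ i = -√2} : ℕ) : ℝ)
  set d : ℝ := ((#{i | μ i = -3} : ℕ) : ℝ)
  have e0 := hsum fun _ => 1
  have e1 := hsum id
  have e2 := hsum (· ^ 2)
  simp only [sum_const, card_univ, hcard, nsmul_eq_mul, mul_one, id, htrace, htrace_sq,
    neg_sq, sq_sqrt zero_le_two] at e0 e1 e2
  push_cast at e0
  -- `3 (a - d) + √2 (b - c) = 0` with integer coefficients forces `b = c`
  have hbc : b = c := by
    by_contra hbc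
    have hm : (#{i | μ i = √2} : ℤ) - #{i | μ i = -√2} ≠ 0 := by
      intro h
      exact hbc (congrArg Nat.cast (by omega))
    apply (irrational_sqrt_two.intCast_mul hm).ne_int (3 * (#{i | μ i = -3} - #{i | μ i = 3}))
    push_cast
    linarith
  rw [hbc] at e1 e2
  have ha : a = k := by linarith
  have hb : b = 6 * k := by linarith
  have h1 := one_lt_sqrt_two
  have h2 := sqrt_two_lt_three_halves
  have hle (x : ℝ) : (#{i | x ≤ μ i} : ℝ) = a * (if x ≤ 3 then 1 else 0) +
      b * (if x ≤ √2 then 1 else 0) + c * (if x ≤ -√2 then 1 else 0) +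
      d * (if x ≤ -3 then 1 else 0) := by
    rw [natCast_card_filter]
    exact hsum fun y => if x ≤ y then 1 else 0
  refine ⟨?_, ?_, ?_⟩ <;> [have := hle 3; have := hle √2; have := hle (-√2)] <;>
    split_ifs at this <;> first | (exfalso; linarith) | (rify; linarith)

end HeawoodEigenvalues

theorem Antitone.apply_eq_sqrt_two_and_neg_sqrt_two {N k : ℕ} {μ : Fin N → ℝ} (hμ : Antitone μ)
    (hval : ∀ i, μ i ∈ heawoodEigenvalues) (h3 : #{i | 3 ≤ μ i} = k)
    (hs : #{i | √2 ≤ μ i} = 7 * k) (hn : #{i | -√2 ≤ μ i} = 13 * k) (i : Fin N) :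
    (k ≤ i → i < 7 * k → μ i = √2) ∧ (7 * k ≤ i → i < 13 * k → μ i = -√2) := by
  have h3i := hμ.le_apply_iff_lt_card 3 i
  have hsi := hμ.le_apply_iff_lt_card √2 i
  have hni := hμ.le_apply_iff_lt_card (-√2) i
  rw [h3] at h3i
  rw [hs] at hsi
  rw [hn] at hni
  have := one_lt_sqrt_two
  have := sqrt_two_lt_three_halves
  have hi := hval i
  simp only [heawoodEigenvalues, mem_insert, mem_singleton] at hi
  constructor
  · intro hlo hhi
    have hge : √2 ≤ μ i := hsi.2 hhi
    have hlt : μ i < 3 := lt_of_not_ge fun h => absurd (h3i.1 h) (by omega)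
    rcases hi with h | h | h | h <;> rw [h] at hge hlt ⊢ <;> linarith
  · intro hlo hhi
    have hge : -√2 ≤ μ i := hni.2 hhi
    have hlt : μ i < √2 := lt_of_not_ge fun h => absurd (hsi.1 h) (by omega)
    rcases hi with h | h | h | h <;> rw [h] at hge hlt ⊢ <;> linarith

instance : DecidableRel heawoodGraph.Adj
  | .inl p, .inr l => decidable_of_iff (p - l = 0 ∨ p - l = 1 ∨ p - l = 3) (by simp [heawoodGraph])
  | .inr l, .inl p => decidable_of_iff (p - l = 0 ∨ p - l = 1 ∨ p - l = 3) (by simp [heawoodGraph])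
  | .inl _, .inl _ => isFalse (by simp [heawoodGraph])
  | .inr _, .inr _ => isFalse (by simp [heawoodGraph])

theorem heawoodGraph_isRegularOfDegree : heawoodGraph.IsRegularOfDegree 3 := by
  unfold SimpleGraph.IsRegularOfDegree
  decide

-- Two points of the Fano plane lie on exactly one line and dually, so `A² = 2 + J` on each side
-- of the bipartition, with `J` the all-ones `7 × 7` matrix; hence `(A² - 2)² = 7 (A² - 2)`.
theorem heawoodGraph_adjMatrix_relation :
    (heawoodGraph.adjMatrix ℤ ^ 2 - 2) * (heawoodGraph.adjMatrix ℤ ^ 2 - 9) = 0 := by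
  decide

@[simp]
theorem kHeawood_adj {k : ℕ} {x y : Fin k × (ZMod 7 ⊕ ZMod 7)} :
    (kHeawood k).Adj x y ↔ x.1 = y.1 ∧ heawoodGraph.Adj x.2 y.2 :=
  Iff.rfl

theorem kHeawood_isRegularOfDegree (k : ℕ) : (kHeawood k).IsRegularOfDegree 3 := by
  rintro ⟨a, u⟩
  rw [← SimpleGraph.card_neighborSet_eq_degree, ← heawoodGraph_isRegularOfDegree u,
    ← SimpleGraph.card_neighborSet_eq_degree]
  refine Fintype.card_congr ⟨fun x => ⟨x.1.2, x.2.2⟩, fun y => ⟨(a, y.1), rfl, y.2⟩, ?_, ?_⟩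
  · rintro ⟨⟨b, w⟩, hb, _⟩
    cases hb
    rfl
  · rintro ⟨w, _⟩
    rfl

theorem kHeawood_aeval_adjMatrix (k : ℕ) :
    aeval ((kHeawood k).adjMatrix ℝ) ((X ^ 2 - 2) * (X ^ 2 - 9) : ℝ[X]) = 0 := by
  let Φ : Matrix (ZMod 7 ⊕ ZMod 7) (ZMod 7 ⊕ ZMod 7) ℤ →+*
      Matrix (Fin k × (ZMod 7 ⊕ ZMod 7)) (Fin k × (ZMod 7 ⊕ ZMod 7)) ℝ :=
    (Matrix.reindexAlgEquiv ℝ ℝ (Equiv.prodComm _ (Fin k))).toRingHom.comp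
      ((Matrix.blockDiagonalRingHom _ (Fin k) ℝ).comp
        ((Pi.constRingHom (Fin k) _).comp (Int.castRingHom ℝ).mapMatrix))
  have hΦ : Φ (heawoodGraph.adjMatrix ℤ) = (kHeawood k).adjMatrix ℝ := by
    ext ⟨a, u⟩ ⟨b, v⟩
    rw [SimpleGraph.adjMatrix_apply]
    by_cases hab : a = b <;> by_cases huv : heawoodGraph.Adj u v <;>
      simp [Φ, Matrix.blockDiagonal_apply, SimpleGraph.adjMatrix_apply, hab, huv]
  have h := congrArg Φ heawoodGraph_adjMatrix_relation
  rw [map_mul, map_sub, map_sub, map_pow, map_ofNat, map_ofNat, map_zero, hΦ] at h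
  rwa [map_mul, map_sub, map_sub, map_pow, aeval_X, map_ofNat, map_ofNat]

theorem kHeawood_median_band_general (k : ℕ) :
    Fintype.card (Fin k × (ZMod 7 ⊕ ZMod 7)) = 14 * k ∧
    (kHeawood k).IsRegularOfDegree 3 ∧
    ∀ (μ : Fin (Fintype.card (Fin k × (ZMod 7 ⊕ ZMod 7))) → ℝ),
      (kHeawood k).IsEigenvalueSeq μ →
      (∀ i : Fin (Fintype.card (Fin k × (ZMod 7 ⊕ ZMod 7))),
        k + 1 ≤ (i : ℕ) + 1 → (i : ℕ) + 1 ≤ 13 * k → |μ i| = Real.sqrt 2) ∧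
      (∀ H L : Fin (Fintype.card (Fin k × (ZMod 7 ⊕ ZMod 7))),
        (H : ℕ) = (14 * k - 1) / 2 → (L : ℕ) = (14 * k) / 2 →
        μ H = Real.sqrt 2 ∧ μ L = -Real.sqrt 2) := by
  have hcard : Fintype.card (Fin k × (ZMod 7 ⊕ ZMod 7)) = 14 * k := by
    simp only [Fintype.card_prod, Fintype.card_sum, ZMod.card, Fintype.card_fin]
    ring
  refine ⟨hcard, kHeawood_isRegularOfDegree k, fun μ hμ => ?_⟩
  have hval i : μ i ∈ heawoodEigenvalues :=
    mem_heawoodEigenvalues_of_isRoot (hμ.isRoot (kHeawood_aeval_adjMatrix k) i)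
  have htrace_sq : ∑ i, μ i ^ 2 = 42 * k := by
    simp only [hμ.sum_sq_eq_sum_degree, kHeawood_isRegularOfDegree k _, sum_const, card_univ,
      hcard, nsmul_eq_mul]
    push_cast
    ring
  obtain ⟨h3, hs, hn⟩ := card_filter_le_of_forall_mem_heawoodEigenvalues hval
    (by rw [Fintype.card_fin, hcard]) hμ.sum_eq_zero htrace_sq
  have hpattern := hμ.1.apply_eq_sqrt_two_and_neg_sqrt_two hval h3 hs hn
  refine ⟨fun i hlo hhi => ?_, fun H L hH hL => ?_⟩
  · by_cases hi : (i : ℕ) < 7 * k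
    · rw [(hpattern i).1 (by omega) hi, abs_of_pos (by positivity)]
    · rw [(hpattern i).2 (by omega) (by omega), abs_neg, abs_of_pos (by positivity)]
  · have := H.isLt.trans_eq hcard
    exact ⟨(hpattern H).1 (by omega) (by omega), (hpattern L).2 (by omega) (by omega)⟩

/-- For every `k ≥ 1`, the disjoint union `G` of `k` copies of the
Heawood graph is a 3-regular graph on `n = 14k` vertices whose eigenvalues satisfy
`|λ_i(G)| = √2` for all (1-based) indices `i` with `k+1 ≤ i ≤ 13k`; in particular
the median eigenvalues (1-based positions `H = ⌊(n+1)/2⌋ = 7k` and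
`L = ⌈(n+1)/2⌉ = 7k+1`, i.e. 0-indexed positions `(14k-1)/2` and `(14k)/2`) are
`λ_H = √2` and `λ_L = -√2`. -/
theorem kHeawood_median_band (k : ℕ) (hk : 1 ≤ k) :
    Fintype.card (Fin k × (ZMod 7 ⊕ ZMod 7)) = 14 * k ∧
    (kHeawood k).IsRegularOfDegree 3 ∧
    ∀ (μ : Fin (Fintype.card (Fin k × (ZMod 7 ⊕ ZMod 7))) → ℝ),
      (kHeawood k).IsEigenvalueSeq μ →
      (∀ i : Fin (Fintype.card (Fin k × (ZMod 7 ⊕ ZMod 7))),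
        k + 1 ≤ (i : ℕ) + 1 → (i : ℕ) + 1 ≤ 13 * k → |μ i| = Real.sqrt 2) ∧
      (∀ H L : Fin (Fintype.card (Fin k × (ZMod 7 ⊕ ZMod 7))),
        (H : ℕ) = (14 * k - 1) / 2 → (L : ℕ) = (14 * k) / 2 →
        μ H = Real.sqrt 2 ∧ μ L = -Real.sqrt 2) :=
  kHeawood_median_band_general k
end
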